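/- arXiv:1006.0151 — 2 statements merged into one kernel-verified Lean document; each statement's English description precedes it below -/
import Mathlib

section
/- For every n ≥ 1 and all Hermitian n×n complex matrices A, B, C, one has log Tr e^A − log Tr e^{B/2} − log Tr e^{C/2} ≤ ‖A − (B+C)/2‖, where e^M denotes the matrix exponential, Tr the trace, and ‖·‖ the operator norm. -/
/-!
Put `E = A - (B + C)/2` and expand in an orthonormal eigenbasis `(bᵢ)` of `A`. Each eigenvalue
`λᵢ = ⟪bᵢ, (B/2) bᵢ⟫ + ⟪bᵢ, (E + C/2) bᵢ⟫` is at most `⟪bᵢ, (B/2) bᵢ⟫ + ‖E‖ + log Tr e^{C/2}`.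
Jensen's inequality for `exp`, with the weights `|⟪vⱼ, x⟫|²` of a unit vector `x` in an eigenbasis
`(vⱼ)` (Peierls' inequality), gives `exp ⟪x, M x⟫ ≤ ⟪x, e^M x⟫` for Hermitian `M`; in particular
`exp ⟪x, (C/2) x⟫ ≤ ⟪x, e^{C/2} x⟫ ≤ Tr e^{C/2}`. Hence `e^{λᵢ} ≤ e^{‖E‖} Tr e^{C/2} ⟪bᵢ, e^{B/2} bᵢ⟫`,
and summing over `i` yields `Tr e^A ≤ e^{‖E‖} Tr e^{B/2} Tr e^{C/2}`.
-/

open scoped InnerProductSpace Matrix.Norms.L2Operator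
open RCLike

namespace OrthonormalBasis

variable {𝕜 E ι : Type*} [RCLike 𝕜] [NormedAddCommGroup E] [InnerProductSpace 𝕜 E] [Fintype ι]
  (b : OrthonormalBasis ι 𝕜 E) {T : E →ₗ[𝕜] E} {μ : ι → ℝ}

theorem re_inner_map_self_eq_sum (hT : ∀ j, T (b j) = (μ j : 𝕜) • b j) (x : E) :
    re ⟪x, T x⟫_𝕜 = ∑ j, ‖⟪b j, x⟫_𝕜‖ ^ 2 * μ j := by
  have hTx : T x = ∑ j, (⟪b j, x⟫_𝕜 * μ j) • b j := by
    conv_lhs => rw [← b.sum_repr' x]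
    simp only [map_sum, map_smul, hT, smul_smul]
  rw [hTx, inner_sum, map_sum]
  refine Finset.sum_congr rfl fun j _ => ?_
  rw [inner_smul_right, ← inner_conj_symm, mul_comm, ← mul_assoc, mul_conj, norm_conj]
  norm_cast

theorem map_re_inner_map_self_le {S : E →ₗ[𝕜] E} {f : ℝ → ℝ} (hf : ConvexOn ℝ Set.univ f)
    (hT : ∀ j, T (b j) = (μ j : 𝕜) • b j) (hS : ∀ j, S (b j) = (f (μ j) : 𝕜) • b j)
    {x : E} (hx : ‖x‖ = 1) :
    f (re ⟪x, T x⟫_𝕜) ≤ re ⟪x, S x⟫_𝕜 := by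
  rw [b.re_inner_map_self_eq_sum hT, b.re_inner_map_self_eq_sum hS]
  simpa only [smul_eq_mul] using hf.map_sum_le (fun j _ => sq_nonneg ‖⟪b j, x⟫_𝕜‖)
    (by rw [b.sum_sq_norm_inner_right, hx, one_pow]) (fun j _ => Set.mem_univ (μ j))

theorem re_inner_map_self_le_sum (hT : ∀ j, T (b j) = (μ j : 𝕜) • b j) (hμ : ∀ j, 0 ≤ μ j)
    {x : E} (hx : ‖x‖ = 1) :
    re ⟪x, T x⟫_𝕜 ≤ ∑ j, μ j := by
  rw [b.re_inner_map_self_eq_sum hT]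
  refine Finset.sum_le_sum fun j _ => mul_le_of_le_one_left (hμ j) ?_
  calc ‖⟪b j, x⟫_𝕜‖ ^ 2 ≤ (‖b j‖ * ‖x‖) ^ 2 := by gcongr; exact norm_inner_le_norm _ _
    _ = 1 := by rw [b.orthonormal.1 j, hx, one_mul, one_pow]

theorem re_inner_map_self_eq (hT : ∀ j, T (b j) = (μ j : 𝕜) • b j) (j : ι) :
    re ⟪b j, T (b j)⟫_𝕜 = μ j := by
  rw [hT, inner_smul_right, inner_self_eq_norm_sq_to_K, b.orthonormal.1 j]
  simp

theorem re_trace_eq_sum (hT : ∀ j, T (b j) = (μ j : 𝕜) • b j) :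
    re (LinearMap.trace 𝕜 E T) = ∑ j, μ j := by
  rw [LinearMap.trace_eq_sum_inner T b, map_sum]
  exact Finset.sum_congr rfl fun j _ => b.re_inner_map_self_eq hT j

end OrthonormalBasis

namespace Matrix

variable {𝕜 n : Type*} [RCLike 𝕜] [Fintype n] [DecidableEq n]

theorem trace_toEuclideanLin (M : Matrix n n 𝕜) :
    LinearMap.trace 𝕜 _ (toEuclideanLin M) = M.trace := by
  rw [toEuclideanLin_eq_toLin_orthonormal,
    LinearMap.trace_eq_matrix_trace 𝕜 (EuclideanSpace.basisFun n 𝕜).toBasis,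
    LinearMap.toMatrix_toLin]

theorem re_inner_toEuclideanLin_le_norm (M : Matrix n n 𝕜) {x : EuclideanSpace 𝕜 n}
    (hx : ‖x‖ = 1) : re ⟪x, toEuclideanLin M x⟫_𝕜 ≤ ‖M‖ :=
  calc re ⟪x, toEuclideanLin M x⟫_𝕜 ≤ ‖x‖ * ‖toEuclideanLin M x‖ :=
        (re_le_norm _).trans (norm_inner_le_norm _ _)
    _ ≤ ‖x‖ * (‖M‖ * ‖x‖) := by
        gcongr; exact (toEuclideanLin.trans LinearMap.toContinuousLinearMap M).le_opNorm x
    _ = ‖M‖ := by rw [hx, one_mul, mul_one]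

namespace IsHermitian

theorem toEuclideanLin_cfc_eigenvectorBasis {A : Matrix n n 𝕜} (hA : A.IsHermitian)
    (f : ℝ → ℝ) (j : n) :
    toEuclideanLin (cfc f A) (hA.eigenvectorBasis j) =
      (f (hA.eigenvalues j) : 𝕜) • hA.eigenvectorBasis j := by
  apply WithLp.ofLp_injective
  rw [hA.cfc_eq, IsHermitian.cfc, Unitary.conjStarAlgAut_apply, ofLp_toLpLin, toLin'_apply,
    ← mulVec_mulVec, ← mulVec_mulVec, star_eigenvectorUnitary_mulVec, diagonal_mulVec_single,
    mul_one]
  ext i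
  simp [mulVec_single, real_smul_eq_coe_mul, mul_comm]

theorem toEuclideanLin_eigenvectorBasis {A : Matrix n n 𝕜} (hA : A.IsHermitian) (j : n) :
    toEuclideanLin A (hA.eigenvectorBasis j) =
      (hA.eigenvalues j : 𝕜) • hA.eigenvectorBasis j := by
  simpa [cfc_id ℝ A hA.isSelfAdjoint] using hA.toEuclideanLin_cfc_eigenvectorBasis id j

theorem toEuclideanLin_exp_eigenvectorBasis {A : Matrix n n ℂ} (hA : A.IsHermitian) (j : n) :
    toEuclideanLin (NormedSpace.exp A) (hA.eigenvectorBasis j) =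
      (Real.exp (hA.eigenvalues j) : ℂ) • hA.eigenvectorBasis j := by
  rw [← CFC.real_exp_eq_normedSpace_exp hA.isSelfAdjoint]
  exact hA.toEuclideanLin_cfc_eigenvectorBasis Real.exp j

theorem re_trace_exp {A : Matrix n n ℂ} (hA : A.IsHermitian) :
    re (NormedSpace.exp A).trace = ∑ j, Real.exp (hA.eigenvalues j) := by
  rw [← trace_toEuclideanLin]
  exact hA.eigenvectorBasis.re_trace_eq_sum hA.toEuclideanLin_exp_eigenvectorBasis

theorem re_trace_exp_pos [Nonempty n] {A : Matrix n n ℂ} (hA : A.IsHermitian) :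
    0 < re (NormedSpace.exp A).trace := by
  rw [hA.re_trace_exp]
  exact Finset.sum_pos (fun j _ => Real.exp_pos _) Finset.univ_nonempty

theorem exp_re_inner_le {A : Matrix n n ℂ} (hA : A.IsHermitian) {x : EuclideanSpace ℂ n}
    (hx : ‖x‖ = 1) :
    Real.exp (re ⟪x, toEuclideanLin A x⟫_ℂ) ≤ re ⟪x, toEuclideanLin (NormedSpace.exp A) x⟫_ℂ :=
  hA.eigenvectorBasis.map_re_inner_map_self_le convexOn_exp hA.toEuclideanLin_eigenvectorBasis
    hA.toEuclideanLin_exp_eigenvectorBasis hx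

theorem re_inner_le_log_re_trace_exp {A : Matrix n n ℂ} (hA : A.IsHermitian)
    {x : EuclideanSpace ℂ n} (hx : ‖x‖ = 1) :
    re ⟪x, toEuclideanLin A x⟫_ℂ ≤ Real.log (re (NormedSpace.exp A).trace) := by
  have hexp : Real.exp (re ⟪x, toEuclideanLin A x⟫_ℂ) ≤ re (NormedSpace.exp A).trace := by
    refine (hA.exp_re_inner_le hx).trans ?_
    rw [hA.re_trace_exp]
    exact hA.eigenvectorBasis.re_inner_map_self_le_sum hA.toEuclideanLin_exp_eigenvectorBasis
      (fun j => (Real.exp_pos _).le) hx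
  exact (Real.le_log_iff_exp_le ((Real.exp_pos _).trans_le hexp)).2 hexp

theorem re_trace_exp_le_exp_mul {A B : Matrix n n ℂ} (hA : A.IsHermitian) (hB : B.IsHermitian)
    {c : ℝ} (h : ∀ x : EuclideanSpace ℂ n, ‖x‖ = 1 → re ⟪x, toEuclideanLin (A - B) x⟫_ℂ ≤ c) :
    re (NormedSpace.exp A).trace ≤ Real.exp c * re (NormedSpace.exp B).trace := by
  set b := hA.eigenvectorBasis
  have hexp_eigenvalue (j : n) : Real.exp (hA.eigenvalues j) ≤
      Real.exp c * re ⟪b j, toEuclideanLin (NormedSpace.exp B) (b j)⟫_ℂ := by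
    have hsplit : hA.eigenvalues j =
        re ⟪b j, toEuclideanLin B (b j)⟫_ℂ + re ⟪b j, toEuclideanLin (A - B) (b j)⟫_ℂ := by
      rw [map_sub, LinearMap.sub_apply, inner_sub_right, map_sub, add_sub_cancel,
        b.re_inner_map_self_eq hA.toEuclideanLin_eigenvectorBasis]
    calc Real.exp (hA.eigenvalues j)
        ≤ Real.exp (c + re ⟪b j, toEuclideanLin B (b j)⟫_ℂ) := by
          rw [Real.exp_le_exp, hsplit]; linarith [h (b j) (b.orthonormal.1 j)]
      _ ≤ Real.exp c * re ⟪b j, toEuclideanLin (NormedSpace.exp B) (b j)⟫_ℂ := by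
          rw [Real.exp_add]; gcongr; exact hB.exp_re_inner_le (b.orthonormal.1 j)
  calc re (NormedSpace.exp A).trace = ∑ j, Real.exp (hA.eigenvalues j) := hA.re_trace_exp
    _ ≤ ∑ j, Real.exp c * re ⟪b j, toEuclideanLin (NormedSpace.exp B) (b j)⟫_ℂ :=
        Finset.sum_le_sum fun j _ => hexp_eigenvalue j
    _ = Real.exp c * re (NormedSpace.exp B).trace := by
        rw [← Finset.mul_sum, ← map_sum, ← LinearMap.trace_eq_sum_inner, trace_toEuclideanLin]

end IsHermitian

end Matrix

theorem log_trace_exp_sub_log_trace_exp_half_le_general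
    (n : ℕ) (A B C : Matrix (Fin n) (Fin n) ℂ)
    (hA : A.IsHermitian) (hB : B.IsHermitian) (hC : C.IsHermitian) :
    Real.log (Matrix.trace (NormedSpace.exp A)).re -
      Real.log (Matrix.trace (NormedSpace.exp ((2 : ℂ)⁻¹ • B))).re -
      Real.log (Matrix.trace (NormedSpace.exp ((2 : ℂ)⁻¹ • C))).re ≤
      ‖A - (2 : ℂ)⁻¹ • (B + C)‖ := by
  cases isEmpty_or_nonempty (Fin n) with
  | inl _ => simp [Matrix.trace]
  | inr _ =>
  have hhalf : IsSelfAdjoint (2 : ℂ)⁻¹ := by simp [IsSelfAdjoint]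
  have hB₂ := hB.smul hhalf
  have hC₂ := hC.smul hhalf
  have hform (x : EuclideanSpace ℂ (Fin n)) (hx : ‖x‖ = 1) :
      re ⟪x, Matrix.toEuclideanLin (A - (2 : ℂ)⁻¹ • B) x⟫_ℂ ≤
        ‖A - (2 : ℂ)⁻¹ • (B + C)‖ + Real.log (re (NormedSpace.exp ((2 : ℂ)⁻¹ • C)).trace) := by
    rw [show A - (2 : ℂ)⁻¹ • B = (A - (2 : ℂ)⁻¹ • (B + C)) + (2 : ℂ)⁻¹ • C by module,
      map_add, LinearMap.add_apply, inner_add_right, map_add]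
    exact add_le_add (Matrix.re_inner_toEuclideanLin_le_norm _ hx)
      (hC₂.re_inner_le_log_re_trace_exp hx)
  have htrace := hA.re_trace_exp_le_exp_mul hB₂ hform
  rw [Real.exp_add, Real.exp_log hC₂.re_trace_exp_pos] at htrace
  have hlog := Real.log_le_log hA.re_trace_exp_pos htrace
  rw [Real.log_mul (by positivity [hC₂.re_trace_exp_pos]) hB₂.re_trace_exp_pos.ne',
    Real.log_mul (Real.exp_pos _).ne' hC₂.re_trace_exp_pos.ne', Real.log_exp] at hlog
  simp only [re_to_complex] at hlog
  linarith

/-- For every `n ≥ 1` and all Hermitian `n × n` complex matrices `A`, `B`, `C`,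
`log Tr e^A − log Tr e^{B/2} − log Tr e^{C/2} ≤ ‖A − (B + C)/2‖`, where the norm is the
`ℓ²` operator norm.  (Since the matrices are Hermitian, the traces of the exponentials are
positive reals, so we express them via the real part.) -/
theorem log_trace_exp_sub_log_trace_exp_half_le
    (n : ℕ) (hn : 1 ≤ n) (A B C : Matrix (Fin n) (Fin n) ℂ)
    (hA : A.IsHermitian) (hB : B.IsHermitian) (hC : C.IsHermitian) :
    Real.log (Matrix.trace (NormedSpace.exp A)).re -
      Real.log (Matrix.trace (NormedSpace.exp ((2 : ℂ)⁻¹ • B))).re -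
      Real.log (Matrix.trace (NormedSpace.exp ((2 : ℂ)⁻¹ • C))).re ≤
      ‖A - (2 : ℂ)⁻¹ • (B + C)‖ :=
  log_trace_exp_sub_log_trace_exp_half_le_general n A B C hA hB hC
end

section
/- Consider the generalized zero range process on the torus Λ = (ℤ/Lℤ)^d (d ≥ 1, L ≥ 2) with a nonempty finite symmetric set of directions E ⊆ Λ∖{0}, rates α_q(ν, n) ≥ 0 (q ∈ E, ν ≥ 1, n ≥ 0) with α_q(ν, n) = 0 unless 1 ≤ ν ≤ n, and single-site weights p : ℕ → (0, ∞). Assume: (i) there is ν_max < ∞ with α_q(ν, ·) ≡ 0 for all ν > ν_max; (ii) for every z > 0 the series ∑_{n≥0} z^n p(n) and ∑_{n≥0} z^n α_q(ν, n+ν) p(n+ν) converge for all q ∈ E and 1 ≤ ν ≤ ν_max; (iii) the product measure P(n) = ∏_{i∈Λ} p(n_i) is stationary, i.e., for every configuration n : Λ → ℕ, ∑_{i∈Λ} ∑_{q∈E} ∑_{ν=1}^{n_i} [ α_{−q}(ν, n_{i+q} + ν) · P(n^{i,q,ν}) − α_q(ν, n_i) · P(n) ] = 0. Then for each q ∈ E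 there exists g_q : {1,…,ν_max} → [0, ∞) such that α_q(ν, n) = g_q(ν)·p(n − ν)/p(n) for all 1 ≤ ν ≤ n. -/
/-!
Fix `q ∈ E` and look at configurations supported on the two sites `0` and `q`, with `a` and `b`
particles. Subtracting from the stationarity equation its instances with one site emptied
leaves the identity
`∑_{ν ≤ a} p(a-ν) X_ν(b) + ∑_{ν ≤ b} p(b-ν) Y_ν(a) = 0`,
where `Y_ν(a) = α_q(ν, a+ν) p(a+ν) p(0) - α_q(ν, ν) p(ν) p(a)` vanishes identically exactly
when `α_q(ν, ·)` has the product form, and `X` is the same expression for `-q`.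
Solving for `b = 1, 2, …` in turn writes every `Y_μ` as a combination `∑_ν U_{μν} p(· - ν)` of
shifts of `p`, and likewise `X_ν = ∑_μ V_{νμ} p(· - μ)`; the shifts are linearly independent,
which forces `V = -Uᵀ`. Since `Y_μ + c p ≥ 0` for a constant `c`, the generating function
`∑_a z^a (Y_μ(a) + c p(a)) = (∑_ν U_{μν} z^ν + c) ∑_n z^n p(n)` is nonnegative for all `z > 0`,
so the last nonzero entry of every row of `U` is positive; by the same argument for `X`, the
last nonzero entry of every column of `U` is negative. Hence `U = 0`, i.e. `Y = 0`.
-/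

/-- The configuration obtained from `n` by moving `ν` particles from site `i` to site
`i + q` on the torus. -/
def updN {d L : ℕ} (n : (Fin d → ZMod L) → ℕ) (i q : Fin d → ZMod L) (ν : ℕ) :
    (Fin d → ZMod L) → ℕ :=
  fun j => if j = i then n i - ν else if j = i + q then n (i + q) + ν else n j

open Finset

def shiftSeq (p : ℕ → ℝ) (ν a : ℕ) : ℝ := if ν ≤ a then p (a - ν) else 0

lemma sum_Icc_mul_eq_sum_shiftSeq (p : ℕ → ℝ) {K : ℕ} {f : ℕ → ℝ} (hf : ∀ ν, K < ν → f ν = 0)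
    (a : ℕ) : ∑ ν ∈ Icc 1 a, p (a - ν) * f ν = ∑ ν ∈ Icc 1 K, shiftSeq p ν a * f ν := by
  have hleft : ∑ ν ∈ Icc 1 a, p (a - ν) * f ν
      = ∑ ν ∈ Icc 1 (max a K), shiftSeq p ν a * f ν := by
    refine sum_subset_zero_on_sdiff (Icc_subset_Icc le_rfl (le_max_left a K))
      (fun ν hν => ?_) fun ν hν => by simp [shiftSeq, (mem_Icc.1 hν).2]
    simp only [mem_sdiff, mem_Icc] at hν
    simp [shiftSeq, show ¬ν ≤ a by omega]
  have hright : ∑ ν ∈ Icc 1 K, shiftSeq p ν a * f ν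
      = ∑ ν ∈ Icc 1 (max a K), shiftSeq p ν a * f ν := by
    refine sum_subset_zero_on_sdiff (Icc_subset_Icc le_rfl (le_max_right a K))
      (fun ν hν => ?_) fun _ _ => rfl
    simp only [mem_sdiff, mem_Icc] at hν
    simp [hf ν (by omega)]
  rw [hleft, hright]

lemma eq_zero_of_sum_mul_shiftSeq_eq_zero {p : ℕ → ℝ} (hp0 : p 0 ≠ 0) {K : ℕ} {c : ℕ → ℝ}
    (h : ∀ a, ∑ ν ∈ Icc 1 K, c ν * shiftSeq p ν a = 0) : ∀ ν ∈ Icc 1 K, c ν = 0 := by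
  intro ν
  induction ν using Nat.strong_induction_on with
  | _ ν ih =>
  intro hν
  have hν' := h ν
  rw [sum_eq_single_of_mem ν hν] at hν'
  · simpa [shiftSeq, hp0] using hν'
  · intro ν' hν' hne
    rcases lt_or_gt_of_ne hne with hlt | hgt
    · rw [ih ν' hlt hν', zero_mul]
    · simp [shiftSeq, not_le.2 hgt]

lemma hasSum_pow_mul_shiftSeq {p : ℕ → ℝ} {z S : ℝ} (h : HasSum (fun n => z ^ n * p n) S)
    (ν : ℕ) : HasSum (fun a => z ^ a * shiftSeq p ν a) (z ^ ν * S) := by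
  rw [← hasSum_nat_add_iff' ν]
  have hlow : ∑ a ∈ range ν, z ^ a * shiftSeq p ν a = 0 :=
    sum_eq_zero fun a ha => by simp [shiftSeq, not_le.2 (mem_range.1 ha)]
  rw [hlow, sub_zero]
  have hshift : (fun n => z ^ (n + ν) * shiftSeq p ν (n + ν)) = fun n => z ^ ν * (z ^ n * p n) := by
    funext n
    simp only [shiftSeq, Nat.le_add_left, if_true, Nat.add_sub_cancel, pow_add]
    ring
  exact hshift ▸ h.mul_left (z ^ ν)

open Filter Topology in
lemma nonneg_of_neg_le_sum_mul_pow {s : Finset ℕ} {c : ℕ → ℝ} {m : ℕ} (hm : 0 < m) (hms : m ∈ s)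
    (htop : ∀ ν ∈ s, m < ν → c ν = 0) {C : ℝ} (h : ∀ z, 0 < z → -C ≤ ∑ ν ∈ s, c ν * z ^ ν) :
    0 ≤ c m := by
  have hterm : ∀ ν ∈ s, Tendsto (fun z : ℝ => c ν * z ^ ν / z ^ m) atTop
      (𝓝 (if ν = m then c ν else 0)) := by
    intro ν hν
    rcases lt_trichotomy ν m with hlt | rfl | hgt
    · simpa [hlt.ne, mul_div_assoc] using (tendsto_pow_div_pow_atTop_zero hlt).const_mul (c ν)
    · refine tendsto_const_nhds.congr' ?_
      filter_upwards [eventually_gt_atTop 0] with z hz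
      simp [(pow_pos hz ν).ne']
    · simp [htop ν hν hgt, hgt.ne']
  have hlim := tendsto_finsetSum s hterm
  rw [sum_ite_eq', if_pos hms] at hlim
  have hlow : Tendsto (fun z : ℝ => -C / z ^ m) atTop (𝓝 0) :=
    tendsto_const_nhds.div_atTop (tendsto_pow_atTop hm.ne')
  refine le_of_tendsto_of_tendsto hlow hlim ?_
  filter_upwards [eventually_gt_atTop 0] with z hz
  rw [← sum_div]
  exact div_le_div_of_nonneg_right (h z hz) (pow_pos hz m).le

lemma neg_le_sum_mul_pow_of_eq_sum_shiftSeq {p : ℕ → ℝ} (hp : ∀ n, 0 < p n) {K : ℕ}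
    {f u : ℕ → ℝ} {c : ℝ}
    (hf : ∀ a, f a = ∑ ν ∈ Icc 1 K, u ν * shiftSeq p ν a) (hfc : ∀ a, 0 ≤ f a + c * p a)
    {z : ℝ} (hz : 0 < z) (hP : Summable fun n => z ^ n * p n) :
    -c ≤ ∑ ν ∈ Icc 1 K, u ν * z ^ ν := by
  obtain ⟨S, hS⟩ := hP
  have hSpos : 0 < S := by
    refine lt_of_lt_of_le ?_ (le_hasSum hS 0 fun n _ => (mul_pos (pow_pos hz n) (hp n)).le)
    simpa using hp 0
  have hsum : HasSum (fun a => z ^ a * (f a + c * p a)) ((∑ ν ∈ Icc 1 K, u ν * z ^ ν + c) * S) := by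
    have hfun : (fun a => z ^ a * (f a + c * p a))
        = fun a => ∑ ν ∈ Icc 1 K, u ν * (z ^ a * shiftSeq p ν a) + c * (z ^ a * p a) := by
      funext a
      rw [hf, mul_add, mul_sum]
      congr 1
      · exact sum_congr rfl fun ν _ => by ring
      · ring
    have hval : (∑ ν ∈ Icc 1 K, u ν * z ^ ν + c) * S
        = ∑ ν ∈ Icc 1 K, u ν * (z ^ ν * S) + c * S := by
      simp only [add_mul, sum_mul, mul_assoc]
    rw [hfun, hval]
    exact (hasSum_sum fun ν _ => (hasSum_pow_mul_shiftSeq hS ν).mul_left (u ν)).add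
      (hS.mul_left c)
  have := hsum.nonneg fun a => mul_nonneg (pow_pos hz a).le (hfc a)
  nlinarith [(mul_nonneg_iff_of_pos_right hSpos).1 this]

lemma top_coeff_nonneg {p : ℕ → ℝ} (hp : ∀ n, 0 < p n)
    (hP : ∀ z, 0 < z → Summable fun n => z ^ n * p n) {K : ℕ} {f u : ℕ → ℝ}
    (hf : ∀ a, f a = ∑ ν ∈ Icc 1 K, u ν * shiftSeq p ν a) (hlb : ∃ c, ∀ a, 0 ≤ f a + c * p a)
    {m : ℕ} (hm : m ∈ Icc 1 K) (htop : ∀ ν ∈ Icc 1 K, m < ν → u ν = 0) : 0 ≤ u m := by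
  obtain ⟨c, hc⟩ := hlb
  exact nonneg_of_neg_le_sum_mul_pow (mem_Icc.1 hm).1 hm htop
    fun z hz => neg_le_sum_mul_pow_of_eq_sum_shiftSeq hp hf hc hz (hP z hz)

lemma eq_zero_of_top_nonneg_of_top_nonpos {s : Finset ℕ} {U : ℕ → ℕ → ℝ}
    (hrow : ∀ μ ∈ s, ∀ ν ∈ s, (∀ ν' ∈ s, ν < ν' → U μ ν' = 0) → 0 ≤ U μ ν)
    (hcol : ∀ μ ∈ s, ∀ ν ∈ s, (∀ μ' ∈ s, μ < μ' → U μ' ν = 0) → U μ ν ≤ 0) :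
    ∀ μ ∈ s, ∀ ν ∈ s, U μ ν = 0 := by
  -- A nonzero entry maximizing `μ + ν` is the last nonzero one in its row and in its column.
  by_contra! hne
  obtain ⟨μ₀, hμ₀, ν₀, hν₀, h₀⟩ := hne
  obtain ⟨⟨μ, ν⟩, hmem, hmax⟩ := ((s ×ˢ s).filter fun x => U x.1 x.2 ≠ 0).exists_max_image
    (fun x => x.1 + x.2) ⟨(μ₀, ν₀), by simp [hμ₀, hν₀, h₀]⟩
  simp only [mem_filter, mem_product] at hmem hmax
  obtain ⟨⟨hμ, hν⟩, hUne⟩ := hmem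
  have hrow' : ∀ ν' ∈ s, ν < ν' → U μ ν' = 0 := fun ν' hν' hlt => by
    by_contra h
    have := hmax (μ, ν') ⟨⟨hμ, hν'⟩, h⟩
    simp only at this
    omega
  have hcol' : ∀ μ' ∈ s, μ < μ' → U μ' ν = 0 := fun μ' hμ' hlt => by
    by_contra h
    have := hmax (μ', ν) ⟨⟨hμ', hν⟩, h⟩
    simp only at this
    omega
  exact hUne (le_antisymm (hcol μ hμ ν hν hcol') (hrow μ hμ ν hν hrow'))

def TwoSiteEquation (p : ℕ → ℝ) (X Y : ℕ → ℕ → ℝ) : Prop :=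
  ∀ a b, ∑ ν ∈ Icc 1 a, p (a - ν) * X ν b + ∑ ν ∈ Icc 1 b, p (b - ν) * Y ν a = 0

namespace TwoSiteEquation

variable {p : ℕ → ℝ} {X Y : ℕ → ℕ → ℝ}

lemma symm (h : TwoSiteEquation p X Y) : TwoSiteEquation p Y X :=
  fun a b => (add_comm _ _).trans (h b a)

lemma exists_eq_sum_shiftSeq (hFE : TwoSiteEquation p X Y) (hp0 : p 0 ≠ 0) {K : ℕ}
    (hX : ∀ ν b, K < ν → X ν b = 0)
    {μ : ℕ} (hμ : 1 ≤ μ) : ∃ u : ℕ → ℝ, ∀ a, Y μ a = ∑ ν ∈ Icc 1 K, u ν * shiftSeq p ν a := by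
  induction μ using Nat.strong_induction_on with
  | _ μ ih =>
  choose! v hv using fun k (hk : k ∈ Ico 1 μ) => ih k (mem_Ico.1 hk).2 (mem_Ico.1 hk).1
  refine ⟨fun ν => -(X ν μ + ∑ k ∈ Ico 1 μ, p (μ - k) * v k ν) / p 0, fun a => ?_⟩
  have h := hFE a μ
  rw [sum_Icc_mul_eq_sum_shiftSeq p (hX · μ), ← Ico_add_one_right_eq_Icc 1 μ,
    sum_Ico_succ_top hμ, Nat.sub_self] at h
  have hY : p 0 * Y μ a = -∑ ν ∈ Icc 1 K, shiftSeq p ν a * X ν μ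
      - ∑ k ∈ Ico 1 μ, p (μ - k) * ∑ ν ∈ Icc 1 K, v k ν * shiftSeq p ν a := by
    have hYk : ∑ k ∈ Ico 1 μ, p (μ - k) * Y k a
        = ∑ k ∈ Ico 1 μ, p (μ - k) * ∑ ν ∈ Icc 1 K, v k ν * shiftSeq p ν a :=
      sum_congr rfl fun k hk => by rw [hv k hk a]
    linarith
  refine mul_left_cancel₀ hp0 (hY.trans ?_)
  simp only [mul_sum, sum_mul, div_mul_eq_mul_div, mul_div_cancel₀ _ hp0, neg_add, add_mul,
    sum_add_distrib, neg_mul, sum_neg_distrib]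
  rw [sum_comm]
  simp only [mul_left_comm, mul_comm, mul_assoc, sub_eq_add_neg]

lemma coeff_add_coeff_eq_zero (hFE : TwoSiteEquation p X Y) (hp0 : p 0 ≠ 0) {K : ℕ}
    {U V : ℕ → ℕ → ℝ}
    (hX : ∀ ν b, K < ν → X ν b = 0) (hY : ∀ ν a, K < ν → Y ν a = 0)
    (hU : ∀ μ ∈ Icc 1 K, ∀ a, Y μ a = ∑ ν ∈ Icc 1 K, U μ ν * shiftSeq p ν a)
    (hV : ∀ ν ∈ Icc 1 K, ∀ b, X ν b = ∑ μ ∈ Icc 1 K, V ν μ * shiftSeq p μ b) :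
    ∀ μ ∈ Icc 1 K, ∀ ν ∈ Icc 1 K, U μ ν + V ν μ = 0 := by
  have hsplit : ∀ a b, ∑ ν ∈ Icc 1 K,
      (∑ μ ∈ Icc 1 K, (U μ ν + V ν μ) * shiftSeq p μ b) * shiftSeq p ν a = 0 := by
    intro a b
    have eX : ∑ ν ∈ Icc 1 K, shiftSeq p ν a * X ν b
        = ∑ ν ∈ Icc 1 K, shiftSeq p ν a * ∑ μ ∈ Icc 1 K, V ν μ * shiftSeq p μ b :=
      sum_congr rfl fun ν hν => by rw [hV ν hν b]
    have eY : ∑ μ ∈ Icc 1 K, shiftSeq p μ b * Y μ a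
        = ∑ μ ∈ Icc 1 K, shiftSeq p μ b * ∑ ν ∈ Icc 1 K, U μ ν * shiftSeq p ν a :=
      sum_congr rfl fun μ hμ => by rw [hU μ hμ a]
    rw [← hFE a b, sum_Icc_mul_eq_sum_shiftSeq p (hX · b),
      sum_Icc_mul_eq_sum_shiftSeq p (hY · a), eX, eY]
    simp only [add_mul, sum_add_distrib, sum_mul, mul_sum]
    rw [add_comm, sum_comm (s := Icc 1 K) (f := fun x i => U i x * _ * _)]
    congr 1 <;> exact sum_congr rfl fun _ _ => sum_congr rfl fun _ _ => by ring
  intro μ hμ ν hν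
  exact eq_zero_of_sum_mul_shiftSeq_eq_zero hp0
    (fun b => eq_zero_of_sum_mul_shiftSeq_eq_zero hp0 (hsplit · b) ν hν) μ hμ

theorem eq_zero (hFE : TwoSiteEquation p X Y) (hp : ∀ n, 0 < p n)
    (hP : ∀ z, 0 < z → Summable fun n => z ^ n * p n) {K : ℕ}
    (hX : ∀ ν b, K < ν → X ν b = 0) (hY : ∀ ν a, K < ν → Y ν a = 0)
    (hXlb : ∀ ν, ∃ c, ∀ b, 0 ≤ X ν b + c * p b) (hYlb : ∀ ν, ∃ c, ∀ a, 0 ≤ Y ν a + c * p a)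
    {μ : ℕ} (hμ : 1 ≤ μ) (a : ℕ) : Y μ a = 0 := by
  have hp0 := (hp 0).ne'
  choose! U hU using fun μ (hμ : μ ∈ Icc 1 K) =>
    hFE.exists_eq_sum_shiftSeq hp0 hX (mem_Icc.1 hμ).1
  choose! V hV using fun ν (hν : ν ∈ Icc 1 K) =>
    hFE.symm.exists_eq_sum_shiftSeq hp0 hY (mem_Icc.1 hν).1
  have hUV := hFE.coeff_add_coeff_eq_zero hp0 hX hY hU hV
  have hU0 : ∀ μ ∈ Icc 1 K, ∀ ν ∈ Icc 1 K, U μ ν = 0 := by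
    refine eq_zero_of_top_nonneg_of_top_nonpos
      (fun μ hμ ν hν htop => top_coeff_nonneg hp hP (hU μ hμ) (hYlb μ) hν htop)
      (fun μ hμ ν hν htop => ?_)
    have hVtop : ∀ μ' ∈ Icc 1 K, μ < μ' → V ν μ' = 0 := fun μ' hμ' hlt => by
      linarith [hUV μ' hμ' ν hν, htop μ' hμ' hlt]
    linarith [hUV μ hμ ν hν, top_coeff_nonneg hp hP (hV ν hν) (hXlb ν) hμ hVtop]
  rcases le_or_gt μ K with hμK | hμK
  · rw [hU μ (mem_Icc.2 ⟨hμ, hμK⟩) a]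
    exact sum_eq_zero fun ν hν => by rw [hU0 μ (mem_Icc.2 ⟨hμ, hμK⟩) ν hν, zero_mul]
  · exact hY μ a hμK

end TwoSiteEquation

lemma prod_mul_eq_prod_mul_of_eqOn_compl_pair {ι M : Type*} [Fintype ι] [DecidableEq ι]
    [CommMonoid M] {f g : ι → M} {i k : ι} (hik : i ≠ k) (h : ∀ j, j ≠ i → j ≠ k → f j = g j) :
    (∏ j, f j) * (g i * g k) = (∏ j, g j) * (f i * f k) := by
  have hrest : ∏ j ∈ univ \ {i, k}, f j = ∏ j ∈ univ \ {i, k}, g j :=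
    prod_congr rfl fun j hj => by
      simp only [mem_sdiff, mem_univ, mem_insert, mem_singleton, true_and, not_or] at hj
      exact h j hj.1 hj.2
  rw [← prod_sdiff (subset_univ {i, k}) (f := f), ← prod_sdiff (subset_univ {i, k}) (f := g),
    prod_pair hik, prod_pair hik, hrest, mul_mul_mul_comm, mul_mul_mul_comm _ (g i * g k)]
  ac_rfl

lemma prod_updN_mul {d L : ℕ} [NeZero L] (p : ℕ → ℝ) (n : (Fin d → ZMod L) → ℕ)
    (i : Fin d → ZMod L) {q : Fin d → ZMod L} (hq : q ≠ 0) (ν : ℕ) :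
    (∏ j, p (updN n i q ν j)) * (p (n i) * p (n (i + q)))
      = (∏ j, p (n j)) * (p (n i - ν) * p (n (i + q) + ν)) := by
  have hiq : i ≠ i + q := fun h => hq (by simpa using h.symm)
  convert prod_mul_eq_prod_mul_of_eqOn_compl_pair hiq (f := fun j => p (updN n i q ν j))
    (g := fun j => p (n j)) fun j hji hjk => by simp [updN, hji, hjk] using 3
  · simp [updN]
  · simp [updN, hiq.symm]

section BondBalance

variable {G : Type*} (α : G → ℕ → ℕ → ℝ) (p : ℕ → ℝ)

/-- The terms of the stationarity sum at a site `i` and direction `q`, divided by `P(n)`, where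
`x = n i` and `y = n (i + q)`: moving `ν` particles changes `P` only at these two sites. -/
noncomputable def bondBalance [Neg G] (q : G) (x y : ℕ) : ℝ :=
  ∑ ν ∈ Icc 1 x, (α (-q) ν (y + ν) * (p (x - ν) * p (y + ν)) / (p x * p y) - α q ν x)

def excessRate (q : G) (ν b : ℕ) : ℝ :=
  α q ν (b + ν) * p (b + ν) * p 0 - α q ν ν * p ν * p b

@[simp]
lemma bondBalance_zero_left [Neg G] (q : G) (y : ℕ) : bondBalance α p q 0 y = 0 := by
  simp [bondBalance]

lemma bondBalance_sub_bondBalance_zero [Neg G] (hp : ∀ n, 0 < p n) (q : G) (a b : ℕ) :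
    bondBalance α p q a b - bondBalance α p q a 0
      = (∑ ν ∈ Icc 1 a, p (a - ν) * excessRate α p (-q) ν b) / (p a * p b * p 0) := by
  have := hp a; have := hp b; have := hp 0
  rw [bondBalance, bondBalance, ← sum_sub_distrib, sum_div]
  refine sum_congr rfl fun ν _ => ?_
  rw [excessRate, zero_add]
  field_simp
  ring

lemma bondBalance_sub_add_bondBalance_sub_eq_zero [AddCommGroup G] [Fintype G] [DecidableEq G]
    {E : Finset G} (hE0 : (0 : G) ∉ E) {q₀ : G} (hq₀ : q₀ ∈ E) (hq₀' : -q₀ ∈ E)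
    (hbal : ∀ n : G → ℕ, ∑ i, ∑ q ∈ E, bondBalance α p q (n i) (n (i + q)) = 0) (a b : ℕ) :
    bondBalance α p q₀ a b - bondBalance α p q₀ a 0
      + (bondBalance α p (-q₀) b a - bondBalance α p (-q₀) b 0) = 0 := by
  have hq₀0 : q₀ ≠ 0 := ne_of_mem_of_not_mem hq₀ hE0
  set n : ℕ → ℕ → G → ℕ := fun a b => Pi.single 0 a + Pi.single q₀ b with hn
  have hn0 : ∀ a b, n a b 0 = a := by simp [hn, hq₀0.symm]
  have hnq₀ : ∀ a b, n a b q₀ = b := by simp [hn, hq₀0]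
  have hn_other : ∀ a b j, j ≠ 0 → j ≠ q₀ → n a b j = 0 := by
    intro a b j h0 hq
    simp [hn, h0, hq]
  have hsites : ∀ a b, ∑ q ∈ E, bondBalance α p q a (n a b q)
      + ∑ q ∈ E, bondBalance α p q b (n a b (q₀ + q)) = 0 := by
    intro a b
    rw [← hbal (n a b), Fintype.sum_eq_add 0 q₀ hq₀0.symm fun i ⟨h0, hq⟩ => by
      simp [hn_other a b i h0 hq]]
    simp only [hn0, hnq₀, zero_add]
  have hdiff0 : ∑ q ∈ E, bondBalance α p q a (n a b q) - ∑ q ∈ E, bondBalance α p q a (n a 0 q)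
      = bondBalance α p q₀ a b - bondBalance α p q₀ a 0 := by
    rw [← sum_sub_distrib, sum_eq_single_of_mem q₀ hq₀ fun q hq hne => ?_, hnq₀, hnq₀]
    rw [hn_other a b q (ne_of_mem_of_not_mem hq hE0) hne,
      hn_other a 0 q (ne_of_mem_of_not_mem hq hE0) hne, sub_self]
  have hdiffq₀ : ∑ q ∈ E, bondBalance α p q b (n a b (q₀ + q))
      - ∑ q ∈ E, bondBalance α p q b (n 0 b (q₀ + q))
      = bondBalance α p (-q₀) b a - bondBalance α p (-q₀) b 0 := by
    rw [← sum_sub_distrib, sum_eq_single_of_mem (-q₀) hq₀' fun q hq hne => ?_, add_neg_cancel,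
      hn0, hn0]
    have h0 : q₀ + q ≠ 0 := fun h => hne (eq_neg_of_add_eq_zero_right h)
    have hq : q₀ + q ≠ q₀ := fun h => ne_of_mem_of_not_mem hq hE0 (by simpa using h)
    rw [hn_other a b _ h0 hq, hn_other 0 b _ h0 hq, sub_self]
  have hab := hsites a b
  have ha0 := hsites a 0
  have h0b := hsites 0 b
  simp only [bondBalance_zero_left, sum_const_zero, add_zero, zero_add] at ha0 h0b
  linarith

lemma twoSiteEquation_excessRate [AddCommGroup G] [Fintype G] [DecidableEq G] {E : Finset G}
    (hp : ∀ n, 0 < p n) (hE0 : (0 : G) ∉ E) {q₀ : G} (hq₀ : q₀ ∈ E) (hq₀' : -q₀ ∈ E)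
    (hbal : ∀ n : G → ℕ, ∑ i, ∑ q ∈ E, bondBalance α p q (n i) (n (i + q)) = 0) :
    TwoSiteEquation p (excessRate α p (-q₀)) (excessRate α p q₀) := by
  intro a b
  have h := bondBalance_sub_add_bondBalance_sub_eq_zero α p hE0 hq₀ hq₀' hbal a b
  rw [bondBalance_sub_bondBalance_zero α p hp, bondBalance_sub_bondBalance_zero α p hp, neg_neg,
    mul_comm (p b) (p a), ← add_div, div_eq_zero_iff] at h
  exact h.resolve_right (by have := hp a; have := hp b; have := hp 0; positivity)

end BondBalance

lemma sum_sum_bondBalance_eq_zero {d L : ℕ} [NeZero L] {E : Finset (Fin d → ZMod L)}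
    (hE0 : (0 : Fin d → ZMod L) ∉ E) (α : (Fin d → ZMod L) → ℕ → ℕ → ℝ) {p : ℕ → ℝ}
    (hp : ∀ n, 0 < p n) (n : (Fin d → ZMod L) → ℕ)
    (hstat : ∑ i, ∑ q ∈ E, ∑ ν ∈ Icc 1 (n i),
      (α (-q) ν (n (i + q) + ν) * ∏ j, p (updN n i q ν j) - α q ν (n i) * ∏ j, p (n j)) = 0) :
    ∑ i, ∑ q ∈ E, bondBalance α p q (n i) (n (i + q)) = 0 := by
  have hP : 0 < ∏ j, p (n j) := prod_pos fun j _ => hp _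
  refine (mul_eq_zero.1 ?_).resolve_left hP.ne'
  rw [← hstat, mul_sum]
  refine sum_congr rfl fun i _ => ?_
  rw [mul_sum]
  refine sum_congr rfl fun q hq => ?_
  rw [bondBalance, mul_sum]
  refine sum_congr rfl fun ν _ => ?_
  have hmove := prod_updN_mul p n i (ne_of_mem_of_not_mem hq hE0) ν
  have := hp (n i); have := hp (n (i + q))
  rw [← eq_div_iff (by positivity)] at hmove
  rw [hmove]
  ring

theorem gzrp_product_measure_necessary_general (d L : ℕ) [NeZero L]
    (E : Finset (Fin d → ZMod L))
    (hE0 : (0 : Fin d → ZMod L) ∉ E) (hEsym : ∀ q ∈ E, -q ∈ E)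
    (α : (Fin d → ZMod L) → ℕ → ℕ → ℝ)
    (hαnn : ∀ q ν n, 0 ≤ α q ν n)
    (p : ℕ → ℝ) (hp : ∀ n, 0 < p n)
    (νmax : ℕ)
    (hνmax : ∀ q (ν n : ℕ), νmax < ν → α q ν n = 0)
    (hsum : ∀ z : ℝ, 0 < z →
      Summable (fun n : ℕ => z ^ n * p n) ∧
      ∀ q ∈ E, ∀ ν : ℕ, 1 ≤ ν → ν ≤ νmax →
        Summable (fun n : ℕ => z ^ n * α q ν (n + ν) * p (n + ν)))
    (hstat : ∀ n : (Fin d → ZMod L) → ℕ,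
      ∑ i : Fin d → ZMod L, ∑ q ∈ E, ∑ ν ∈ Finset.Icc 1 (n i),
        (α (-q) ν (n (i + q) + ν) * ∏ j : Fin d → ZMod L, p (updN n i q ν j) -
          α q ν (n i) * ∏ j : Fin d → ZMod L, p (n j)) = 0) :
    ∀ q ∈ E, ∃ g : ℕ → ℝ,
      (∀ ν : ℕ, 1 ≤ ν → ν ≤ νmax → 0 ≤ g ν) ∧
      ∀ ν n : ℕ, 1 ≤ ν → ν ≤ n → α q ν n = g ν * p (n - ν) / p n := by
  intro q₀ hq₀
  have hFE := twoSiteEquation_excessRate α p hp hE0 hq₀ (hEsym q₀ hq₀)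
    fun n => sum_sum_bondBalance_eq_zero hE0 α hp n (hstat n)
  have hexcess_lb : ∀ q ν, ∃ c, ∀ b, 0 ≤ excessRate α p q ν b + c * p b := fun q ν =>
    ⟨α q ν ν * p ν, fun b => by
      rw [excessRate, sub_add_cancel]
      exact mul_nonneg (mul_nonneg (hαnn _ _ _) (hp _).le) (hp 0).le⟩
  have hexcess_large : ∀ q ν b, νmax < ν → excessRate α p q ν b = 0 := fun q ν b hν => by
    simp [excessRate, hνmax _ _ _ hν]
  refine ⟨fun ν => α q₀ ν ν * p ν / p 0, fun ν _ _ => ?_, fun ν n hν hνn => ?_⟩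
  · exact div_nonneg (mul_nonneg (hαnn _ _ _) (hp ν).le) (hp 0).le
  · have h := hFE.eq_zero hp (fun z hz => (hsum z hz).1)
      (hexcess_large (-q₀)) (hexcess_large q₀) (hexcess_lb (-q₀)) (hexcess_lb q₀) hν (n - ν)
    rw [excessRate, Nat.sub_add_cancel hνn] at h
    have := hp n; have := hp 0
    field_simp
    linarith

/-- Necessity for the generalized zero range process: if the number of particles moved per
transition is bounded by `ν_max`, the relevant generating series converge, and the product
measure `P(n) = ∏_i p(n_i)` is stationary, then the rates have the product form
`α_q(ν,n) = g_q(ν) p(n−ν)/p(n)`. -/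
theorem gzrp_product_measure_necessary (d L : ℕ) (hd : 1 ≤ d) (hL : 2 ≤ L) [NeZero L]
    (E : Finset (Fin d → ZMod L)) (hEne : E.Nonempty)
    (hE0 : (0 : Fin d → ZMod L) ∉ E) (hEsym : ∀ q ∈ E, -q ∈ E)
    (α : (Fin d → ZMod L) → ℕ → ℕ → ℝ)
    (hαnn : ∀ q ν n, 0 ≤ α q ν n)
    (hαzero : ∀ q ν n, ¬(1 ≤ ν ∧ ν ≤ n) → α q ν n = 0)
    (p : ℕ → ℝ) (hp : ∀ n, 0 < p n)
    (νmax : ℕ)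
    (hνmax : ∀ q (ν n : ℕ), νmax < ν → α q ν n = 0)
    (hsum : ∀ z : ℝ, 0 < z →
      Summable (fun n : ℕ => z ^ n * p n) ∧
      ∀ q ∈ E, ∀ ν : ℕ, 1 ≤ ν → ν ≤ νmax →
        Summable (fun n : ℕ => z ^ n * α q ν (n + ν) * p (n + ν)))
    (hstat : ∀ n : (Fin d → ZMod L) → ℕ,
      ∑ i : Fin d → ZMod L, ∑ q ∈ E, ∑ ν ∈ Finset.Icc 1 (n i),
        (α (-q) ν (n (i + q) + ν) * ∏ j : Fin d → ZMod L, p (updN n i q ν j) -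
          α q ν (n i) * ∏ j : Fin d → ZMod L, p (n j)) = 0) :
    ∀ q ∈ E, ∃ g : ℕ → ℝ,
      (∀ ν : ℕ, 1 ≤ ν → ν ≤ νmax → 0 ≤ g ν) ∧
      ∀ ν n : ℕ, 1 ≤ ν → ν ≤ n → α q ν n = g ν * p (n - ν) / p n :=
  gzrp_product_measure_necessary_general d L E hE0 hEsym α hαnn p hp νmax hνmax hsum hstat
end
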